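/- arXiv:1208.3594 — 3 statements merged into one kernel-verified Lean document; each statement's English description precedes it below -/
import Mathlib

section
/- Let n be a positive integer with n ≡ 2 (mod 3). In B = ℍ[ℚ, −3, −n], set e₀ = 1, e₁ = (1 + i)/2, e₂ = (3 + i + 3j + k)/6, e₃ = (−3 + i − 2k)/6. Then the ℤ-submodule of B spanned by e₀, e₁, e₂, e₃ contains 1, contains i and j, and is closed under multiplication (so it is a ℤ-order of B), one has e₁² = e₁ − 1 (so e₁ is a primitive sixth root of unity) and j² = −n, and the determinant of the trace Gram matrix of (e₀, e₁, e₂, e₃) equals −n² (so the order has reduced discriminant n). -/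
open Quaternion

/-- The reduced trace of a quaternion. -/
def trd {c₁ c₂ : ℚ} (x : ℍ[ℚ, c₁, c₂]) : ℚ := 2 * x.re

/-- The trace Gram matrix of a quadruple of quaternions:
its `(r, s)` entry is `trd (e r * e s)`. -/
def traceGram {c₁ c₂ : ℚ} (e : Fin 4 → ℍ[ℚ, c₁, c₂]) : Matrix (Fin 4) (Fin 4) ℚ :=
  Matrix.of fun r s => trd (e r * e s)

/-- The ℤ-submodule spanned by a quadruple of quaternions. -/
def quadSpan {c₁ c₂ : ℚ} (e : Fin 4 → ℍ[ℚ, c₁, c₂]) : Submodule ℤ ℍ[ℚ, c₁, c₂] :=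
  Submodule.span ℤ {e 0, e 1, e 2, e 3}

/-!
Write `n = 3m - 1`. The structure constants of `ℍ[ℚ, -3, -n]` in the basis `e` are integers
(polynomials in `m`), so the ℤ-span of `e` is a ring. Each Gram entry `trd (e r * e s)` is then
the integer combination of the traces `2, 1, 1, -1` of `e` given by these constants, and the
determinant becomes a polynomial identity in `m`.
-/

theorem Submodule.mul_mem_span_range_of_structConst {R A ι : Type*} [CommSemiring R]
    [Semiring A] [Algebra R A] [Fintype ι] {e : ι → A} (C : ι → ι → ι → R)
    (hC : ∀ r s, e r * e s = ∑ t, C r s t • e t) {x y : A}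
    (hx : x ∈ span R (Set.range e)) (hy : y ∈ span R (Set.range e)) :
    x * y ∈ span R (Set.range e) := by
  refine mul_le.mp ?_ x hx y hy
  rw [span_mul_span, span_le]
  rintro _ ⟨_, ⟨r, rfl⟩, _, ⟨s, rfl⟩, rfl⟩
  show e r * e s ∈ _
  rw [hC]
  exact sum_mem fun t _ => smul_mem _ _ (subset_span ⟨t, rfl⟩)

theorem quadSpan_eq_span_range {c₁ c₂ : ℚ} (e : Fin 4 → ℍ[ℚ, c₁, c₂]) :
    quadSpan e = Submodule.span ℤ (Set.range e) := by
  simp [quadSpan, Fin.range_fin_succ, Fin.tail]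

theorem trd_sum_zsmul {c₁ c₂ : ℚ} {ι : Type*} (s : Finset ι) (a : ι → ℤ)
    (x : ι → ℍ[ℚ, c₁, c₂]) : trd (∑ t ∈ s, a t • x t) = ∑ t ∈ s, a t * trd (x t) := by
  rw [trd, ← QuaternionAlgebra.reₗ_apply, map_sum, Finset.mul_sum]
  simp [trd, mul_left_comm]

theorem traceGram_eq_of_structConst {c₁ c₂ : ℚ} {e : Fin 4 → ℍ[ℚ, c₁, c₂]}
    (C : Fin 4 → Fin 4 → Fin 4 → ℤ) (hC : ∀ r s, e r * e s = ∑ t, C r s t • e t) :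
    traceGram e = Matrix.of fun r s => ∑ t, (C r s t : ℚ) * trd (e t) := by
  ext r s
  rw [traceGram, Matrix.of_apply, hC, trd_sum_zsmul, Matrix.of_apply]

/-- `1, (1+i)/2, (3+i+3j+k)/6, (−3+i−2k)/6` in coordinates. -/
def zeta6Basis (c₂ : ℚ) : Fin 4 → ℍ[ℚ, -3, c₂] :=
  ![1, ⟨1/2, 1/2, 0, 0⟩, ⟨1/2, 1/6, 1/2, 1/6⟩, ⟨-1/2, 1/6, 0, -1/3⟩]

def zeta6StructConst (m : ℤ) : Fin 4 → Fin 4 → Fin 4 → ℤ :=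
  ![![![1, 0, 0, 0], ![0, 1, 0, 0], ![0, 0, 1, 0], ![0, 0, 0, 1]],
    ![![0, 1, 0, 0], ![-1, 1, 0, 0], ![-1, 1, 0, -1], ![0, -1, 1, 1]],
    ![![0, 0, 1, 0], ![0, 0, 1, 1], ![-m, 0, 1, 0], ![m, -m, 0, 1]],
    ![![0, 0, 0, 1], ![0, 0, -1, 0], ![0, m, -1, 0], ![-m, 0, 0, -1]]]

section zeta6Basis

variable {c₂ : ℚ}

@[simp]
theorem zeta6Basis_zero : zeta6Basis c₂ 0 = 1 := rfl

theorem zeta6Basis_mul {m : ℤ} (hm : c₂ = 1 - 3 * m) (r s : Fin 4) :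
    zeta6Basis c₂ r * zeta6Basis c₂ s = ∑ t, zeta6StructConst m r s t • zeta6Basis c₂ t := by
  fin_cases r <;> fin_cases s <;> ext <;>
    simp [zeta6Basis, zeta6StructConst, Fin.sum_univ_four, hm] <;> ring

theorem imI_eq_zeta6Basis :
    (⟨0, 1, 0, 0⟩ : ℍ[ℚ, -3, c₂]) = 2 • zeta6Basis c₂ 1 - zeta6Basis c₂ 0 := by
  ext <;> simp [zeta6Basis]

theorem imJ_eq_zeta6Basis : (⟨0, 0, 1, 0⟩ : ℍ[ℚ, -3, c₂]) =
    2 • zeta6Basis c₂ 2 + zeta6Basis c₂ 3 - zeta6Basis c₂ 1 := by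
  ext <;> simp [zeta6Basis] <;> norm_num

theorem trd_zeta6Basis : (fun t => trd (zeta6Basis c₂ t)) = ![2, 1, 1, -1] := by
  ext t
  fin_cases t <;> norm_num [trd, zeta6Basis]

theorem traceGram_zeta6Basis {m : ℤ} (hm : c₂ = 1 - 3 * m) :
    traceGram (zeta6Basis c₂) = !![2, 1, 1, -1; 1, -1, 0, -1; 1, 0, 1 - 2 * (m : ℚ), m - 1;
      -1, -1, m - 1, 1 - 2 * m] := by
  rw [traceGram_eq_of_structConst _ (zeta6Basis_mul hm)]
  ext r s
  fin_cases r <;> fin_cases s <;>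
    simp [zeta6StructConst, Fin.sum_univ_four, congrFun trd_zeta6Basis] <;> ring

theorem det_traceGram_zeta6Basis {m : ℤ} (hm : c₂ = 1 - 3 * m) :
    (traceGram (zeta6Basis c₂)).det = -(3 * m - 1) ^ 2 := by
  rw [traceGram_zeta6Basis hm]
  simp [Matrix.det_succ_row_zero, Fin.sum_univ_succ, Fin.succAbove]
  ring

end zeta6Basis

theorem stmt_5_general (n : ℕ) (hn3 : n % 3 = 2)
    (i j k : ℍ[ℚ, (-3 : ℚ), -(n : ℚ)])
    (hi : i = ⟨0, 1, 0, 0⟩) (hj : j = ⟨0, 0, 1, 0⟩) (hk : k = ⟨0, 0, 0, 1⟩)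
    (e : Fin 4 → ℍ[ℚ, (-3 : ℚ), -(n : ℚ)])
    (he : e = ![1, (2 : ℚ)⁻¹ • (1 + i), (6 : ℚ)⁻¹ • (3 + i + 3 • j + k),
      (6 : ℚ)⁻¹ • (-3 + i - 2 • k)]) :
    (1 : ℍ[ℚ, (-3 : ℚ), -(n : ℚ)]) ∈ quadSpan e ∧
    i ∈ quadSpan e ∧
    j ∈ quadSpan e ∧
    (∀ x ∈ quadSpan e, ∀ y ∈ quadSpan e, x * y ∈ quadSpan e) ∧
    e 1 ^ 2 = e 1 - 1 ∧
    j ^ 2 = algebraMap ℚ ℍ[ℚ, (-3 : ℚ), -(n : ℚ)] (-(n : ℚ)) ∧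
    (traceGram e).det = -(n : ℚ) ^ 2 := by
  obtain ⟨m, hm⟩ : ∃ m : ℤ, -(n : ℚ) = 1 - 3 * m := by
    refine ⟨(n + 1) / 3, ?_⟩
    have h3 : (((n : ℤ) + 1 : ℤ) : ℚ) = ((3 * ((n + 1) / 3) : ℤ) : ℚ) := congrArg _ (by omega)
    push_cast at h3
    linarith
  replace he : e = zeta6Basis _ := by
    rw [he, hi, hj, hk]
    ext t : 1
    fin_cases t <;> ext <;>
      simp [zeta6Basis, QuaternionAlgebra.re_ofNat, QuaternionAlgebra.imI_ofNat,
        QuaternionAlgebra.imJ_ofNat, QuaternionAlgebra.imK_ofNat] <;> norm_num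
  subst he hi hj
  have hmem (t : Fin 4) : zeta6Basis _ t ∈ quadSpan (zeta6Basis (-(n : ℚ))) :=
    quadSpan_eq_span_range _ ▸ Submodule.subset_span ⟨t, rfl⟩
  refine ⟨hmem 0, ?_, ?_, ?_, ?_, ?_, ?_⟩
  · rw [imI_eq_zeta6Basis]
    exact sub_mem (nsmul_mem (hmem 1) 2) (hmem 0)
  · rw [imJ_eq_zeta6Basis]
    exact sub_mem (add_mem (nsmul_mem (hmem 2) 2) (hmem 3)) (hmem 1)
  · rw [quadSpan_eq_span_range]
    exact fun x hx y hy =>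
      Submodule.mul_mem_span_range_of_structConst _ (zeta6Basis_mul hm) hx hy
  · rw [sq, zeta6Basis_mul hm]
    simp [zeta6StructConst, Fin.sum_univ_four]
    abel
  · ext <;> simp [sq]
  · rw [det_traceGram_zeta6Basis hm]
    linear_combination (-(n : ℚ) - (3 * m - 1)) * hm

/-- For a positive integer `n ≡ 2 (mod 3)`, in `ℍ[ℚ, −3, −n]` the lattice spanned by
`1, (1+i)/2, (3+i+3j+k)/6, (−3+i−2k)/6` contains `1`, `i` and `j`, is closed under
multiplication, one has `((1+i)/2)² = (1+i)/2 − 1` and `j² = −n`, and the trace Gram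
matrix has determinant `−n²`. -/
theorem stmt_5 (n : ℕ) (hn : 0 < n) (hn3 : n % 3 = 2)
    (i j k : ℍ[ℚ, (-3 : ℚ), -(n : ℚ)])
    (hi : i = ⟨0, 1, 0, 0⟩) (hj : j = ⟨0, 0, 1, 0⟩) (hk : k = ⟨0, 0, 0, 1⟩)
    (e : Fin 4 → ℍ[ℚ, (-3 : ℚ), -(n : ℚ)])
    (he : e = ![1, (2 : ℚ)⁻¹ • (1 + i), (6 : ℚ)⁻¹ • (3 + i + 3 • j + k),
      (6 : ℚ)⁻¹ • (-3 + i - 2 • k)]) :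
    (1 : ℍ[ℚ, (-3 : ℚ), -(n : ℚ)]) ∈ quadSpan e ∧
    i ∈ quadSpan e ∧
    j ∈ quadSpan e ∧
    (∀ x ∈ quadSpan e, ∀ y ∈ quadSpan e, x * y ∈ quadSpan e) ∧
    e 1 ^ 2 = e 1 - 1 ∧
    j ^ 2 = algebraMap ℚ ℍ[ℚ, (-3 : ℚ), -(n : ℚ)] (-(n : ℚ)) ∧
    (traceGram e).det = -(n : ℚ) ^ 2 :=
  stmt_5_general n hn3 i j k hi hj hk e he
end

section
/- Let n be a positive integer divisible by 3. In B = ℍ[ℚ, −3, −n], set e₀ = 1, e₁ = (1 + i)/2, e₂ = k/3, e₃ = (k − 3j)/6. Then the ℤ-submodule of B spanned by e₀, e₁, e₂, e₃ contains 1, contains j, and is closed under multiplication (so it is a ℤ-order of B), one has e₁² = e₁ − 1 and e₂² = −n/3, and the determinant of the trace Gram matrix of (e₀, e₁, e₂, e₃) equals −n² (so the order has reduced discriminant n). -/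
open Quaternion

/-!
With `ζ = (1 + i)/2` and `ω = k/3` one has `ζ² = ζ - 1`, `ωζ = ζ̄ω = (1 - ζ)ω` and
`ω² = -n/3`, an integer when `3 ∣ n`, and the fourth basis vector `(k - 3j)/6` is `ζω`.
These three relations alone show that `ℤ ⊕ ℤζ ⊕ ℤω ⊕ ℤζω` is closed under multiplication.
The trace Gram matrix is block diagonal, the trace form of `ℤ[ζ]` (determinant `-3`) next to
that of `ℤ[ζ]ω` (determinant `n²/3`), so its determinant is `-n²`.
-/

open Submodule

theorem Submodule.mul_mem_span_of_forall_mul_mem {R A : Type*} [CommSemiring R] [Semiring A]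
    [Algebra R A] {s : Set A} (hs : ∀ a ∈ s, ∀ b ∈ s, a * b ∈ span R s)
    {x y : A} (hx : x ∈ span R s) (hy : y ∈ span R s) : x * y ∈ span R s := by
  have hle : span R s * span R s ≤ span R s := by
    rw [span_mul_span, span_le]
    exact Set.mul_subset_iff.mpr hs
  exact hle (mul_mem_mul hx hy)

theorem mul_mem_span_of_zeta_omega {R A : Type*} [CommRing R] [Ring A] [Algebra R A]
    {m : R} {ζ ω : A} (hζ : ζ * ζ = ζ - 1) (hωζ : ω * ζ = (1 - ζ) * ω)
    (hω : ω * ω = -algebraMap R A m) {x y : A} (hx : x ∈ span R {1, ζ, ω, ζ * ω})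
    (hy : y ∈ span R {1, ζ, ω, ζ * ω}) : x * y ∈ span R {1, ζ, ω, ζ * ω} := by
  set L := span R ({1, ζ, ω, ζ * ω} : Set A)
  have h1 : (1 : A) ∈ L := subset_span (by simp)
  have hζL : ζ ∈ L := subset_span (by simp)
  have hωL : ω ∈ L := subset_span (by simp)
  have hζωL : ζ * ω ∈ L := subset_span (by simp)
  have hmL : algebraMap R A m ∈ L := by
    simpa only [Algebra.algebraMap_eq_smul_one] using smul_mem L m h1
  have hmζL : algebraMap R A m * ζ ∈ L := by
    simpa only [Algebra.smul_def] using smul_mem L m hζL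
  have hζ_mul_conj : ζ * (1 - ζ) = 1 := by rw [mul_sub, mul_one, hζ]; abel
  refine mul_mem_span_of_forall_mul_mem ?_ hx hy
  simp only [Set.mem_insert_iff, Set.mem_singleton_iff]
  rintro a (rfl | rfl | rfl | rfl) b (rfl | rfl | rfl | rfl)
  all_goals try simpa only [one_mul, mul_one]
  · rw [hζ]; exact sub_mem hζL h1
  · rw [← mul_assoc, hζ, sub_mul, one_mul]; exact sub_mem hζωL hωL
  · rw [hωζ, sub_mul, one_mul]; exact sub_mem hωL hζωL
  · rw [hω]; exact neg_mem hmL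
  · rw [← mul_assoc, hωζ, mul_assoc, hω, sub_mul, one_mul, mul_neg, ← Algebra.commutes]
    exact sub_mem (neg_mem hmL) (neg_mem hmζL)
  · rw [mul_assoc, hωζ, ← mul_assoc, hζ_mul_conj, one_mul]; exact hωL
  · rw [mul_assoc, hω, mul_neg, ← Algebra.commutes]; exact neg_mem hmζL
  · rw [mul_assoc, ← mul_assoc ω, hωζ, mul_assoc, hω, ← mul_assoc, hζ_mul_conj, one_mul]
    exact neg_mem hmL

namespace Zeta6Order

variable (n : ℚ)

def ζ₆ : ℍ[ℚ, -3, -n] := (2 : ℚ)⁻¹ • (1 + ⟨0, 1, 0, 0⟩)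

/-- The paper's `ω₂' = (ω₁/3) ω₂ = (i/3) j`. -/
def ω₂ : ℍ[ℚ, -3, -n] := (3 : ℚ)⁻¹ • ⟨0, 0, 0, 1⟩

theorem ζ₆_mul_self : ζ₆ n * ζ₆ n = ζ₆ n - 1 := by
  ext <;> simp [ζ₆] <;> ring

theorem ω₂_mul_ζ₆ : ω₂ n * ζ₆ n = (1 - ζ₆ n) * ω₂ n := by
  ext <;> simp [ζ₆, ω₂] <;> ring

theorem ω₂_mul_self : ω₂ n * ω₂ n = algebraMap ℚ ℍ[ℚ, -3, -n] (-(n / 3)) := by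
  ext <;> simp [ω₂]; ring

theorem ζ₆_mul_ω₂ : ζ₆ n * ω₂ n = (6 : ℚ)⁻¹ • (⟨0, 0, 0, 1⟩ - 3 • ⟨0, 0, 1, 0⟩) := by
  ext <;> simp [ζ₆, ω₂] <;> ring

theorem ω₂_sub_two_ζ₆_mul_ω₂ : ω₂ n - (2 : ℤ) • (ζ₆ n * ω₂ n) = ⟨0, 0, 1, 0⟩ := by
  ext <;> simp [ζ₆, ω₂, QuaternionAlgebra.re_ofNat, QuaternionAlgebra.imI_ofNat,
    QuaternionAlgebra.imJ_ofNat, QuaternionAlgebra.imK_ofNat]; ring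

theorem traceGram_ζ₆_ω₂ : traceGram ![1, ζ₆ n, ω₂ n, ζ₆ n * ω₂ n] =
    !![2, 1, 0, 0; 1, -1, 0, 0; 0, 0, -2 * n / 3, -n / 3; 0, 0, -n / 3, -2 * n / 3] := by
  ext r s
  fin_cases r <;> fin_cases s <;> simp [traceGram, trd, ζ₆, ω₂] <;> ring

theorem det_traceGram_ζ₆_ω₂ : (traceGram ![1, ζ₆ n, ω₂ n, ζ₆ n * ω₂ n]).det = -n ^ 2 := by
  rw [traceGram_ζ₆_ω₂]
  simp [Matrix.det_succ_row_zero, Fin.sum_univ_succ, Fin.succAbove]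
  ring

end Zeta6Order

open Zeta6Order in
theorem stmt_6_general (n : ℕ) (hn3 : 3 ∣ n)
    (i j k : ℍ[ℚ, (-3 : ℚ), -(n : ℚ)])
    (hi : i = ⟨0, 1, 0, 0⟩) (hj : j = ⟨0, 0, 1, 0⟩) (hk : k = ⟨0, 0, 0, 1⟩)
    (e : Fin 4 → ℍ[ℚ, (-3 : ℚ), -(n : ℚ)])
    (he : e = ![1, (2 : ℚ)⁻¹ • (1 + i), (3 : ℚ)⁻¹ • k, (6 : ℚ)⁻¹ • (k - 3 • j)]) :
    (1 : ℍ[ℚ, (-3 : ℚ), -(n : ℚ)]) ∈ quadSpan e ∧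
    j ∈ quadSpan e ∧
    (∀ x ∈ quadSpan e, ∀ y ∈ quadSpan e, x * y ∈ quadSpan e) ∧
    e 1 ^ 2 = e 1 - 1 ∧
    e 2 ^ 2 = algebraMap ℚ ℍ[ℚ, (-3 : ℚ), -(n : ℚ)] (-((n : ℚ) / 3)) ∧
    (traceGram e).det = -(n : ℚ) ^ 2 := by
  obtain rfl : e = ![1, ζ₆ n, ω₂ n, ζ₆ n * ω₂ n] := by rw [he, hi, hk, hj, ζ₆_mul_ω₂]; rfl
  have hL : quadSpan ![1, ζ₆ n, ω₂ n, ζ₆ n * ω₂ n] = span ℤ {1, ζ₆ n, ω₂ n, ζ₆ n * ω₂ n} := rfl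
  obtain ⟨m, rfl⟩ := hn3
  have hω : ω₂ _ * ω₂ _ = -algebraMap ℤ ℍ[ℚ, (-3 : ℚ), -((3 * m : ℕ) : ℚ)] m := by
    have hm : ((3 * m : ℕ) : ℚ) / 3 = ((m : ℤ) : ℚ) := by push_cast; ring
    rw [ω₂_mul_self, hm, map_neg, map_intCast, eq_intCast]
  rw [hL]
  refine ⟨subset_span (by simp), ?_, fun x hx y hy => ?_, sq (ζ₆ _) ▸ ζ₆_mul_self _,
    sq (ω₂ _) ▸ ω₂_mul_self _, det_traceGram_ζ₆_ω₂ _⟩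
  · rw [hj, ← ω₂_sub_two_ζ₆_mul_ω₂]
    exact sub_mem (subset_span (by simp)) (zsmul_mem (subset_span (by simp)) 2)
  · exact mul_mem_span_of_zeta_omega (ζ₆_mul_self _) (ω₂_mul_ζ₆ _) hω hx hy

/-- For a positive integer `n` divisible by 3, in `ℍ[ℚ, −3, −n]` the lattice spanned by
`1, (1+i)/2, k/3, (k−3j)/6` contains `1` and `j`, is closed under multiplication, one has
`((1+i)/2)² = (1+i)/2 − 1` and `(k/3)² = −n/3`, and the trace Gram matrix has
determinant `−n²`. -/
theorem stmt_6 (n : ℕ) (hn : 0 < n) (hn3 : 3 ∣ n)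
    (i j k : ℍ[ℚ, (-3 : ℚ), -(n : ℚ)])
    (hi : i = ⟨0, 1, 0, 0⟩) (hj : j = ⟨0, 0, 1, 0⟩) (hk : k = ⟨0, 0, 0, 1⟩)
    (e : Fin 4 → ℍ[ℚ, (-3 : ℚ), -(n : ℚ)])
    (he : e = ![1, (2 : ℚ)⁻¹ • (1 + i), (3 : ℚ)⁻¹ • k, (6 : ℚ)⁻¹ • (k - 3 • j)]) :
    (1 : ℍ[ℚ, (-3 : ℚ), -(n : ℚ)]) ∈ quadSpan e ∧
    j ∈ quadSpan e ∧
    (∀ x ∈ quadSpan e, ∀ y ∈ quadSpan e, x * y ∈ quadSpan e) ∧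
    e 1 ^ 2 = e 1 - 1 ∧
    e 2 ^ 2 = algebraMap ℚ ℍ[ℚ, (-3 : ℚ), -(n : ℚ)] (-((n : ℚ) / 3)) ∧
    (traceGram e).det = -(n : ℚ) ^ 2 :=
  stmt_6_general n hn3 i j k hi hj hk e he
end

section
/- Let a and b be odd positive integers. In B = ℍ[ℚ, −a, −b], set e₀ = 1, e₁ = i, e₂ = j, e₃ = (1 + i + j + k)/2. Then the ℤ-submodule of B spanned by e₀, e₁, e₂, e₃ contains 1 and is closed under multiplication (so it is a ℤ-order of B, the Hurwitz-type order), and the determinant of the trace Gram matrix of (e₀, e₁, e₂, e₃) equals −4·a²·b² (so the order has reduced discriminant 2·a·b). -/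
/-!
With `i² = c₁`, `j² = c₂` and `h = (1 + i + j + k)/2`, the products of the basis vectors
`1, i, j, h` are integral combinations of them as soon as `c₁` and `c₂` are odd integers: for
instance `h` is a root of `X² - X + nrd h` with `nrd h = (1 - c₁)(1 - c₂)/4 ∈ ℤ`, and
`i h = (c₁ - 1)/2 · (1 + j) + h`. Closure of the span under multiplication then follows by
bilinearity. Subtracting half of each of the first three rows of the trace Gram matrix from the
last makes it triangular with diagonal `2, 2c₁, 2c₂, -c₁c₂/2`, whence the determinant `-4c₁²c₂²`.
-/

open Quaternion QuaternionAlgebra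

section QuadSpan

variable {c₁ c₂ : ℚ} {e : Fin 4 → ℍ[ℚ, c₁, c₂]}

theorem mem_quadSpan (r : Fin 4) : e r ∈ quadSpan e :=
  Submodule.subset_span (by fin_cases r <;> simp)

theorem sum_zsmul_mem_quadSpan (c : Fin 4 → ℤ) : ∑ r, c r • e r ∈ quadSpan e :=
  Submodule.sum_mem _ fun r _ => Submodule.smul_mem _ _ (mem_quadSpan r)

theorem quadSpan_mul_mem (h : ∀ r s, e r * e s ∈ quadSpan e) {x y : ℍ[ℚ, c₁, c₂]}
    (hx : x ∈ quadSpan e) (hy : y ∈ quadSpan e) : x * y ∈ quadSpan e := by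
  have hle : quadSpan e * quadSpan e ≤ quadSpan e := by
    rw [quadSpan, Submodule.span_mul_span, Submodule.span_le, Set.mul_subset_iff]
    simp only [Set.mem_insert_iff, Set.mem_singleton_iff]
    rintro x (rfl | rfl | rfl | rfl) y (rfl | rfl | rfl | rfl) <;> exact h _ _
  exact hle (Submodule.mul_mem_mul hx hy)

end QuadSpan

def hurwitzBasis (c₁ c₂ : ℚ) : Fin 4 → ℍ[ℚ, c₁, c₂] :=
  ![1, ⟨0, 1, 0, 0⟩, ⟨0, 0, 1, 0⟩, ⟨1 / 2, 1 / 2, 1 / 2, 1 / 2⟩]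

@[simp] theorem hurwitzBasis_zero (c₁ c₂ : ℚ) : hurwitzBasis c₁ c₂ 0 = 1 := rfl

@[simp] theorem hurwitzBasis_one (c₁ c₂ : ℚ) : hurwitzBasis c₁ c₂ 1 = ⟨0, 1, 0, 0⟩ := rfl

@[simp] theorem hurwitzBasis_two (c₁ c₂ : ℚ) : hurwitzBasis c₁ c₂ 2 = ⟨0, 0, 1, 0⟩ := rfl

@[simp] theorem hurwitzBasis_three (c₁ c₂ : ℚ) :
    hurwitzBasis c₁ c₂ 3 = ⟨1 / 2, 1 / 2, 1 / 2, 1 / 2⟩ := rfl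

/-- The structure constants of `hurwitzBasis (2m + 1) (2n + 1)`: entry `r s t` is the
coefficient of `e t` in `e r * e s`. -/
def hurwitzMulTable (m n : ℤ) : Fin 4 → Fin 4 → Fin 4 → ℤ :=
  ![![![1, 0, 0, 0], ![0, 1, 0, 0], ![0, 0, 1, 0], ![0, 0, 0, 1]],
    ![![0, 1, 0, 0], ![2 * m + 1, 0, 0, 0], ![-1, -1, -1, 2], ![m, 0, m, 1]],
    ![![0, 0, 1, 0], ![1, 1, 1, -2], ![2 * n + 1, 0, 0, 0], ![n + 1, -n, 1, -1]],
    ![![0, 0, 0, 1], ![m + 1, 1, -m, -1], ![n, n, 0, 1], ![-(m * n), 0, 0, 1]]]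

section HurwitzBasis

variable {c₁ c₂ : ℚ}

theorem hurwitzBasis_mul {m n : ℤ} (h₁ : c₁ = 2 * m + 1) (h₂ : c₂ = 2 * n + 1) (r s : Fin 4) :
    hurwitzBasis c₁ c₂ r * hurwitzBasis c₁ c₂ s =
      ∑ t, hurwitzMulTable m n r s t • hurwitzBasis c₁ c₂ t := by
  subst h₁ h₂
  fin_cases r <;> fin_cases s <;> ext <;> simp [hurwitzMulTable, Fin.sum_univ_four] <;> ring

theorem hurwitzBasis_mul_mem {m n : ℤ} (h₁ : c₁ = 2 * m + 1) (h₂ : c₂ = 2 * n + 1)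
    {x y : ℍ[ℚ, c₁, c₂]} (hx : x ∈ quadSpan (hurwitzBasis c₁ c₂))
    (hy : y ∈ quadSpan (hurwitzBasis c₁ c₂)) : x * y ∈ quadSpan (hurwitzBasis c₁ c₂) :=
  quadSpan_mul_mem (fun r s => hurwitzBasis_mul h₁ h₂ r s ▸ sum_zsmul_mem_quadSpan _) hx hy

theorem traceGram_hurwitzBasis :
    traceGram (hurwitzBasis c₁ c₂) =
      !![2, 0, 0, 1; 0, 2 * c₁, 0, c₁; 0, 0, 2 * c₂, c₂;
        1, c₁, c₂, (1 + c₁ + c₂ - c₁ * c₂) / 2] := by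
  ext r s
  fin_cases r <;> fin_cases s <;> simp [traceGram, trd] <;> ring

theorem det_traceGram_hurwitzBasis :
    (traceGram (hurwitzBasis c₁ c₂)).det = -(4 * c₁ ^ 2 * c₂ ^ 2) := by
  rw [traceGram_hurwitzBasis, Matrix.det_succ_row_zero]
  simp [Fin.sum_univ_succ, Matrix.det_fin_three, Fin.succAbove]
  ring

end HurwitzBasis

theorem stmt_8_general (a b : ℕ) (haodd : Odd a) (hbodd : Odd b)
    (i j k : ℍ[ℚ, -(a : ℚ), -(b : ℚ)])
    (hi : i = ⟨0, 1, 0, 0⟩) (hj : j = ⟨0, 0, 1, 0⟩) (hk : k = ⟨0, 0, 0, 1⟩)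
    (e : Fin 4 → ℍ[ℚ, -(a : ℚ), -(b : ℚ)])
    (he : e = ![1, i, j, (2 : ℚ)⁻¹ • (1 + i + j + k)]) :
    (1 : ℍ[ℚ, -(a : ℚ), -(b : ℚ)]) ∈ quadSpan e ∧
    (∀ x ∈ quadSpan e, ∀ y ∈ quadSpan e, x * y ∈ quadSpan e) ∧
    (traceGram e).det = -(4 * (a : ℚ) ^ 2 * (b : ℚ) ^ 2) := by
  have he_hurwitz : e = hurwitzBasis _ _ := by
    subst hi hj hk he
    funext r
    fin_cases r <;> ext <;> simp
  subst he_hurwitz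
  obtain ⟨m, rfl⟩ := haodd
  obtain ⟨n, rfl⟩ := hbodd
  refine ⟨hurwitzBasis_zero _ _ ▸ mem_quadSpan 0, fun x hx y hy => ?_, ?_⟩
  · exact hurwitzBasis_mul_mem (m := -m - 1) (n := -n - 1) (by push_cast; ring)
      (by push_cast; ring) hx hy
  · rw [det_traceGram_hurwitzBasis]
    ring

/-- For odd positive integers `a`, `b`, in `ℍ[ℚ, −a, −b]` the Hurwitz-type lattice
spanned by `1, i, j, (1+i+j+k)/2` contains `1` and is closed under multiplication,
and its trace Gram matrix has determinant `−4·a²·b²`. -/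
theorem stmt_8 (a b : ℕ) (ha : 0 < a) (hb : 0 < b) (haodd : Odd a) (hbodd : Odd b)
    (i j k : ℍ[ℚ, -(a : ℚ), -(b : ℚ)])
    (hi : i = ⟨0, 1, 0, 0⟩) (hj : j = ⟨0, 0, 1, 0⟩) (hk : k = ⟨0, 0, 0, 1⟩)
    (e : Fin 4 → ℍ[ℚ, -(a : ℚ), -(b : ℚ)])
    (he : e = ![1, i, j, (2 : ℚ)⁻¹ • (1 + i + j + k)]) :
    (1 : ℍ[ℚ, -(a : ℚ), -(b : ℚ)]) ∈ quadSpan e ∧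
    (∀ x ∈ quadSpan e, ∀ y ∈ quadSpan e, x * y ∈ quadSpan e) ∧
    (traceGram e).det = -(4 * (a : ℚ) ^ 2 * (b : ℚ) ^ 2) :=
  stmt_8_general a b haodd hbodd i j k hi hj hk e he
end
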